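/- arXiv:2010.09460 — 6 statements merged into one kernel-verified Lean document; each statement's English description precedes it below -/
import Mathlib

section
/- The explanatory convergence restriction Ex — requiring that there exists n₀ such that for all n ≥ n₀, p(n) = p(n₀) and the language denoted by hypothesis p(n₀) equals the content of the text — is delayable. -/
/-- The content of a text `T : ℕ → Option ℕ` (with `none` as the pause symbol `#`). -/
def content (T : ℕ → Option ℕ) : Set ℕ := {x | ∃ n, T n = some x}

/-- The content of the length-`n` initial segment `T[n]` of a text. -/
def contentUpTo (T : ℕ → Option ℕ) (n : ℕ) : Set ℕ := {x | ∃ i < n, T i = some x}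

/-- A learning restriction `δ` is delayable. -/
def Delayable (δ : (ℕ → ℕ) → (ℕ → Option ℕ) → Prop) : Prop :=
  ∀ (p : ℕ → ℕ) (T T' : ℕ → Option ℕ) (r : ℕ → ℕ),
    content T = content T' → Monotone r → (∀ m, ∃ n, m ≤ r n) →
    δ p T → (∀ n, contentUpTo T (r n) ⊆ contentUpTo T' n) →
    δ (p ∘ r) T'

/-- Explanatory convergence with respect to the hypothesis space `H`. -/
def Ex (H : ℕ → Set ℕ) (p : ℕ → ℕ) (T : ℕ → Option ℕ) : Prop :=
  ∃ n₀, ∀ n ≥ n₀, p n = p n₀ ∧ H (p n₀) = content T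

/-- The restriction `Ex` is delayable. -/
theorem delayable_Ex (H : ℕ → Set ℕ) : Delayable (Ex H) := by
  intro p T T' r hcont hmono hub hEx _
  obtain ⟨n₀, hn₀⟩ := hEx
  obtain ⟨n₁, hn₁⟩ := hub n₀
  refine ⟨n₁, fun n hn => ?_⟩
  have h1 := hn₀ (r n) (le_trans hn₁ (hmono hn))
  have h2 := hn₀ (r n₁) hn₁
  have h3 := hn₀ n₀ le_rfl
  simp only [Function.comp]
  exact ⟨h1.1.trans h2.1.symm, by rw [h2.1, h3.2, hcont]⟩
end

section
/- The consistency restriction Cons — requiring that for all i, content(T[i]) ⊆ H(p(i)) — is not delayable: there exist a hypothesis space H, a hypothesis sequence p, texts T, T' with equal content, and a non-decreasing unbounded function r with ∀ n, content(T[r n]) ⊆ content(T'[n]), such that Cons(p,T) holds but Cons(p ∘ r, T') fails. -/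
/-- The consistency restriction with respect to the hypothesis space `H`. -/
def Cons (H : ℕ → Set ℕ) (p : ℕ → ℕ) (T : ℕ → Option ℕ) : Prop :=
  ∀ i, contentUpTo T i ⊆ H (p i)

/-- `Cons` is not delayable: there is an explicit counterexample witnessing the
failure of the delayability condition. -/
theorem cons_not_delayable :
    ∃ (H : ℕ → Set ℕ) (p : ℕ → ℕ) (T T' : ℕ → Option ℕ) (r : ℕ → ℕ),
      content T = content T' ∧ Monotone r ∧ (∀ m, ∃ n, m ≤ r n) ∧
      Cons H p T ∧ (∀ n, contentUpTo T (r n) ⊆ contentUpTo T' n) ∧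
      ¬ Cons H (p ∘ r) T' := by
  refine ⟨fun n => if n = 0 then ∅ else Set.univ,
    fun n => if n = 1 then 0 else 1,
    fun n => if n = 0 then none else some 0,
    fun _ => some 0, id, ?_, monotone_id, fun m => ⟨m, le_refl m⟩, ?_, ?_, ?_⟩
  · ext x
    constructor
    · rintro ⟨n, hn⟩
      by_cases h : n = 0
      · simp [h] at hn
      · simp [h] at hn
        exact ⟨0, by simp [hn]⟩
    · rintro ⟨n, hn⟩
      simp at hn
      subst hn
      exact ⟨1, by norm_num⟩
  · intro i x hx
    rcases hx with ⟨j, hj, hjx⟩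
    by_cases h : i = 1
    · subst h
      interval_cases j
      simp at hjx
    · simp [h]
  · intro n x hx
    rcases hx with ⟨j, hj, hjx⟩
    by_cases h : j = 0
    · simp [h] at hjx
    · simp [h] at hjx
      exact ⟨j, hj, by simp [hjx]⟩
  · intro hc
    have := hc 1 ⟨0, by norm_num, rfl⟩
    simp at this
end

section
/- Consider the class 𝓛 consisting of ℕ \ {0} together with all sets of the form D ∪ {0} for D a finite subset of ℕ. No iterative learner can explanatorily learn 𝓛 with hypotheses that are characteristic indices: for every total computable function h simulating an iterative learner (taking a previous hypothesis and a current datum to a new hypothesis) there exist a language L in 𝓛 and a text for L on which h does not converge to a program deciding L's characteristic function. -/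
open Nat.Partrec (Code)

/-- `e` is a C-index (characteristic index) for `L`: the `e`-th partial computable
function is total, 0/1-valued, and is the characteristic function of `L`. -/
def CIndex (e : ℕ) (L : Set ℕ) : Prop :=
  ∀ x : ℕ,
    (x ∈ L → (Denumerable.ofNat Code e).eval x = Part.some 1) ∧
    (x ∉ L → (Denumerable.ofNat Code e).eval x = Part.some 0)

/-- The class `𝓛 = {ℕ \ {0}} ∪ {D ∪ {0} | D ⊆ ℕ finite}`. -/
def theClass : Set (Set ℕ) :=
  insert {n : ℕ | n ≠ 0} {S : Set ℕ | ∃ D : Finset ℕ, S = ↑D ∪ {0}}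

/-- The hypothesis sequence of an iterative learner `h` with initial hypothesis `e0`
on the text `T`. -/
def itSeq (h : ℕ → Option ℕ → ℕ) (e0 : ℕ) (T : ℕ → Option ℕ) : ℕ → ℕ
  | 0 => e0
  | n + 1 => h (itSeq h e0 T n) (T n)

/-- If two texts agree on the first `n` positions, the hypothesis sequences agree at `n`. -/
lemma itSeq_congr (h : ℕ → Option ℕ → ℕ) (e0 : ℕ) (T T' : ℕ → Option ℕ) :
    ∀ n, (∀ k, k < n → T k = T' k) → itSeq h e0 T n = itSeq h e0 T' n
  | 0, _ => rfl
  | n + 1, H => by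
      simp only [itSeq]
      rw [itSeq_congr h e0 T T' n (fun k hk => H k (Nat.lt_succ_of_lt hk)),
        H n (Nat.lt_succ_self n)]

/-- No computable iterative learner Ex-learns the class `𝓛` with characteristic
indices as hypotheses: for every such learner there are a language `L ∈ 𝓛` and a
text for `L` on which the learner fails to converge to a C-index for `L`. -/
theorem no_iterative_learner (h : ℕ → Option ℕ → ℕ) (e0 : ℕ) (hComp : Computable₂ h) :
    ∃ L ∈ theClass, ∃ T : ℕ → Option ℕ, content T = L ∧
      ¬ ∃ n₀, ∀ n ≥ n₀, itSeq h e0 T n = itSeq h e0 T n₀ ∧ CIndex (itSeq h e0 T n₀) L := by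
  classical
  -- the ascending text for ℕ \ {0}
  set T : ℕ → Option ℕ := fun n => some (n + 1) with hTdef
  have hcontentT : content T = {n : ℕ | n ≠ 0} := by
    ext x
    constructor
    · rintro ⟨n, hn⟩
      have : n + 1 = x := by simpa [hTdef] using hn
      simp [Set.mem_setOf_eq, ← this]
    · intro hx
      obtain ⟨k, rfl⟩ := Nat.exists_eq_succ_of_ne_zero hx
      exact ⟨k, rfl⟩
  by_cases H0 : ∃ n₀, ∀ n ≥ n₀, itSeq h e0 T n = itSeq h e0 T n₀ ∧
      CIndex (itSeq h e0 T n₀) {n : ℕ | n ≠ 0}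
  · obtain ⟨n₀, hn₀⟩ := H0
    set p := itSeq h e0 T n₀ with hpdef
    have hstab : ∀ m, n₀ ≤ m → h p (some (m + 1)) = p := by
      intro m hm
      have h1 := (hn₀ (m + 1) (le_trans hm (Nat.le_succ m))).1
      have h2 := (hn₀ m hm).1
      calc h p (some (m + 1)) = h (itSeq h e0 T m) (T m) := by rw [h2]
        _ = itSeq h e0 T (m + 1) := rfl
        _ = p := h1
    -- the two finite-language texts
    set T₁ : ℕ → Option ℕ := fun n => if n < n₀ then some (n + 1) else some 0 with hT₁def
    set T₂ : ℕ → Option ℕ := fun n =>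
      if n < n₀ then some (n + 1) else if n = n₀ then some (n₀ + 1) else some 0 with hT₂def
    set L₁ : Set ℕ := ↑(Finset.range (n₀ + 1)) ∪ {0} with hL₁def
    set L₂ : Set ℕ := ↑(Finset.range (n₀ + 2)) ∪ {0} with hL₂def
    have hmem₁ : L₁ ∈ theClass := Set.mem_insert_of_mem _ ⟨Finset.range (n₀ + 1), rfl⟩
    have hmem₂ : L₂ ∈ theClass := Set.mem_insert_of_mem _ ⟨Finset.range (n₀ + 2), rfl⟩
    have hcontent₁ : content T₁ = L₁ := by
      ext x
      constructor
      · rintro ⟨n, hn⟩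
        by_cases hc : n < n₀
        · have : n + 1 = x := by simpa [hT₁def, hc] using hn
          exact Or.inl (by simp [← this]; omega)
        · have : (0 : ℕ) = x := by simpa [hT₁def, hc] using hn
          exact Or.inr (by simp [← this])
      · intro hx
        rcases hx with hx | hx
        · simp only [Finset.coe_range, Set.mem_Iio] at hx
          rcases x with _ | k
          · exact ⟨n₀, by simp [hT₁def]⟩
          · exact ⟨k, by simp only [hT₁def]; rw [if_pos (by omega)]⟩
        · simp only [Set.mem_singleton_iff] at hx
          exact ⟨n₀, by simp [hT₁def, hx]⟩
    have hcontent₂ : content T₂ = L₂ := by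
      ext x
      constructor
      · rintro ⟨n, hn⟩
        by_cases hc : n < n₀
        · have : n + 1 = x := by simpa [hT₂def, hc] using hn
          exact Or.inl (by simp [← this]; omega)
        · by_cases hc' : n = n₀
          · have : n₀ + 1 = x := by simpa [hT₂def, hc, hc'] using hn
            exact Or.inl (by simp [← this])
          · have : (0 : ℕ) = x := by simpa [hT₂def, hc, hc'] using hn
            exact Or.inr (by simp [← this])
      · intro hx
        rcases hx with hx | hx
        · simp only [Finset.coe_range, Set.mem_Iio] at hx
          rcases x with _ | k
          · exact ⟨n₀ + 1, by simp only [hT₂def]; rw [if_neg (by omega), if_neg (by omega)]⟩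
          · by_cases hk : k < n₀
            · exact ⟨k, by simp [hT₂def, hk]⟩
            · have hk' : k = n₀ := by omega
              exact ⟨n₀, by simp [hT₂def, hk']⟩
        · simp only [Set.mem_singleton_iff] at hx
          exact ⟨n₀ + 1, by simp only [hT₂def, hx]; rw [if_neg (by omega), if_neg (by omega)]⟩
    -- hypothesis sequences reach p
    have hseq₁0 : itSeq h e0 T₁ n₀ = p := by
      rw [hpdef]
      exact itSeq_congr h e0 T₁ T n₀ (fun k hk => by simp [hT₁def, hTdef, hk])
    have hseq₂0 : itSeq h e0 T₂ n₀ = p := by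
      rw [hpdef]
      exact itSeq_congr h e0 T₂ T n₀ (fun k hk => by simp [hT₂def, hTdef, hk])
    -- the shifted tails of the two hypothesis sequences coincide
    have htail : ∀ k, itSeq h e0 T₁ (n₀ + 1 + k) = itSeq h e0 T₂ (n₀ + 2 + k) := by
      intro k
      induction k with
      | zero =>
          have e₁ : itSeq h e0 T₁ (n₀ + 1) = h p (some 0) := by
            show h (itSeq h e0 T₁ n₀) (T₁ n₀) = h p (some 0)
            rw [hseq₁0]; simp [hT₁def]
          have e₂a : itSeq h e0 T₂ (n₀ + 1) = p := by
            show h (itSeq h e0 T₂ n₀) (T₂ n₀) = p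
            rw [hseq₂0]
            have : T₂ n₀ = some (n₀ + 1) := by simp [hT₂def]
            rw [this]
            exact hstab n₀ le_rfl
          have e₂ : itSeq h e0 T₂ (n₀ + 2) = h p (some 0) := by
            show h (itSeq h e0 T₂ (n₀ + 1)) (T₂ (n₀ + 1)) = h p (some 0)
            rw [e₂a]
            have : T₂ (n₀ + 1) = some 0 := by simp only [hT₂def]; rw [if_neg (by omega), if_neg (by omega)]
            rw [this]
          rw [e₁]; rw [show n₀ + 2 + 0 = n₀ + 2 from rfl, e₂]
      | succ k ih =>
          have e₁ : T₁ (n₀ + 1 + k) = some 0 := by simp only [hT₁def]; rw [if_neg (by omega)]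
          have e₂ : T₂ (n₀ + 2 + k) = some 0 := by simp only [hT₂def]; rw [if_neg (by omega), if_neg (by omega)]
          show h (itSeq h e0 T₁ (n₀ + 1 + k)) (T₁ (n₀ + 1 + k)) =
            h (itSeq h e0 T₂ (n₀ + 2 + k)) (T₂ (n₀ + 2 + k))
          rw [ih, e₁, e₂]
    by_cases H1 : ∃ m, ∀ n ≥ m, itSeq h e0 T₁ n = itSeq h e0 T₁ m ∧
        CIndex (itSeq h e0 T₁ m) L₁
    · by_cases H2 : ∃ m, ∀ n ≥ m, itSeq h e0 T₂ n = itSeq h e0 T₂ m ∧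
          CIndex (itSeq h e0 T₂ m) L₂
      · exfalso
        obtain ⟨m₁, hm₁⟩ := H1
        obtain ⟨m₂, hm₂⟩ := H2
        set N := max (max m₁ m₂) (n₀ + 1) with hNdef
        have hN₁ : m₁ ≤ N := le_trans (le_max_left _ _) (le_max_left _ _)
        have hN₂ : m₂ ≤ N + 1 := le_trans (le_trans (le_max_right m₁ m₂) (le_max_left _ _))
          (Nat.le_succ N)
        have hNn : n₀ + 1 ≤ N := le_max_right _ _
        have key : itSeq h e0 T₁ N = itSeq h e0 T₂ (N + 1) := by
          have h1 : N = n₀ + 1 + (N - (n₀ + 1)) := by omega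
          have h2 : N + 1 = n₀ + 2 + (N - (n₀ + 1)) := by omega
          have := htail (N - (n₀ + 1))
          rw [← h1, ← h2] at this
          exact this
        have hr₁ : itSeq h e0 T₁ N = itSeq h e0 T₁ m₁ := (hm₁ N hN₁).1
        have hr₂ : itSeq h e0 T₂ (N + 1) = itSeq h e0 T₂ m₂ := (hm₂ (N + 1) hN₂).1
        have hre : itSeq h e0 T₁ m₁ = itSeq h e0 T₂ m₂ := by rw [← hr₁, key, hr₂]
        have hC₁ : CIndex (itSeq h e0 T₁ m₁) L₁ := (hm₁ m₁ le_rfl).2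
        have hC₂ : CIndex (itSeq h e0 T₂ m₂) L₂ := (hm₂ m₂ le_rfl).2
        rw [hre] at hC₁
        have hnot : (n₀ + 1) ∉ L₁ := by
          simp [hL₁def]
        have hin : (n₀ + 1) ∈ L₂ := by
          simp [hL₂def]
        have e0' := (hC₁ (n₀ + 1)).2 hnot
        have e1' := (hC₂ (n₀ + 1)).1 hin
        rw [e0'] at e1'
        have : (0 : ℕ) = 1 := Part.some_inj.mp e1'
        omega
      · exact ⟨L₂, hmem₂, T₂, hcontent₂, H2⟩
    · exact ⟨L₁, hmem₁, T₁, hcontent₁, H1⟩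
  · exact ⟨{n : ℕ | n ≠ 0}, Set.mem_insert _ _, T, hcontentT, H0⟩
end

section
/- The class 𝓛 = {ℕ \ {0}} ∪ {D ∪ {0} | D finite ⊆ ℕ} is learnable by a set-driven learner: there is a (computable) function h from finite subsets of ℕ to hypotheses, and a hypothesis space, such that for every L ∈ 𝓛 and every text T for L, the sequence n ↦ h(content(T[n])) converges syntactically to a hypothesis denoting L. -/
/-- The (finite) content of the length-`n` initial segment `T[n]` of a text. -/
def finContentUpTo (T : ℕ → Option ℕ) (n : ℕ) : Finset ℕ :=
  (Finset.range n).biUnion fun i => (T i).toFinset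

/-!
While `0` has not been seen, the data are consistent with `ℕ \ {0}`, so the learner conjectures
it. Once `0` has appeared the target must be a finite set `D ∪ {0}`, and the learner conjectures
a canonical index of the finite data; on a text for a finite set the data eventually equal the
whole set, so the conjecture stabilizes on a correct index. Index `0` names `ℕ \ {0}` and index
`i + 1` names the finite set whose sorted list has `Encodable` code `i`.
-/

open Encodable

theorem mem_finContentUpTo {T : ℕ → Option ℕ} {n x : ℕ} :
    x ∈ finContentUpTo T n ↔ ∃ i < n, T i = some x := by
  simp [finContentUpTo]

theorem coe_finContentUpTo_subset_content (T : ℕ → Option ℕ) (n : ℕ) :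
    ↑(finContentUpTo T n) ⊆ content T := fun _ hx =>
  let ⟨i, _, hi⟩ := mem_finContentUpTo.1 hx
  ⟨i, hi⟩

theorem exists_finContentUpTo_eq_of_content_eq {T : ℕ → Option ℕ} {E : Finset ℕ}
    (hT : content T = E) : ∃ N, ∀ n ≥ N, finContentUpTo T n = E := by
  have hcovered : ∀ᶠ n in Filter.atTop, ∀ x ∈ E, x ∈ finContentUpTo T n := by
    refine (Filter.eventually_all_finset E).2 fun x hx => ?_
    obtain ⟨i, hi⟩ : x ∈ content T := hT ▸ hx
    exact Filter.eventually_atTop.2 ⟨i + 1, fun n hn => mem_finContentUpTo.2 ⟨i, by omega, hi⟩⟩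
  obtain ⟨N, hN⟩ := Filter.eventually_atTop.1 hcovered
  refine ⟨N, fun n hn => Finset.Subset.antisymm ?_ (hN n hn)⟩
  exact_mod_cast hT ▸ coe_finContentUpTo_subset_content T n

def listOfCode (i : ℕ) : List ℕ := (decode i).getD []

def hypothesis : ℕ → Set ℕ
  | 0 => {x | x ≠ 0}
  | i + 1 => {x | x ∈ listOfCode i}

def hypothesisMem : ℕ → ℕ → Bool
  | 0, x => decide (x ≠ 0)
  | i + 1, x => decide (x ∈ listOfCode i)

def listLearner (l : List ℕ) : ℕ := if 0 ∈ l then encode l + 1 else 0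

def learner (D : Finset ℕ) : ℕ := listLearner (D.sort (· ≤ ·))

theorem mem_hypothesis_iff (i x : ℕ) : x ∈ hypothesis i ↔ hypothesisMem i x = true := by
  cases i <;> simp [hypothesis, hypothesisMem]

theorem primrecRel_list_mem {α : Type*} [Primcodable α] [DecidableEq α] :
    PrimrecRel fun (l : List α) (x : α) => x ∈ l :=
  (PrimrecRel.exists_mem_list Primrec.eq).of_eq fun _ _ => by simp

theorem primrec_listLearner : Primrec listLearner :=
  Primrec.ite (primrecRel_list_mem.comp Primrec.id (Primrec.const 0))
    (Primrec.succ.comp Primrec.encode) (Primrec.const 0)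

theorem primrec₂_hypothesisMem : Primrec₂ hypothesisMem := by
  have hcode : Primrec listOfCode := Primrec.option_getD.comp Primrec.decode (Primrec.const [])
  refine (Primrec.nat_casesOn (h := fun p i => decide (p.2 ∈ listOfCode i)) Primrec.fst
    (PrimrecPred.not (Primrec.eq.comp Primrec.snd (Primrec.const 0))).decide
    (primrecRel_list_mem.comp (hcode.comp Primrec.snd) (Primrec.snd.comp Primrec.fst)).decide.to₂
    ).of_eq ?_
  rintro ⟨_ | i, x⟩ <;> simp [hypothesisMem]

theorem learner_of_zero_notMem {D : Finset ℕ} (h0 : 0 ∉ D) : learner D = 0 := by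
  simp [learner, listLearner, h0]

theorem hypothesis_learner_of_zero_mem {D : Finset ℕ} (h0 : 0 ∈ D) :
    hypothesis (learner D) = D := by
  ext x
  simp [learner, listLearner, h0, hypothesis, listOfCode]

theorem learner_eventually_eq_of_content_eq_finset {T : ℕ → Option ℕ} {E : Finset ℕ}
    (h0 : 0 ∈ E) (hT : content T = E) :
    ∃ n₀, ∀ n ≥ n₀, learner (finContentUpTo T n) = learner (finContentUpTo T n₀) ∧
      hypothesis (learner (finContentUpTo T n₀)) = E := by
  obtain ⟨N, hN⟩ := exists_finContentUpTo_eq_of_content_eq hT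
  refine ⟨N, fun n hn => ⟨?_, ?_⟩⟩
  · rw [hN n hn, hN N le_rfl]
  · rw [hN N le_rfl, hypothesis_learner_of_zero_mem h0]

theorem learner_eq_zero_of_content_eq {T : ℕ → Option ℕ} (hT : content T = {x | x ≠ 0})
    (n : ℕ) : learner (finContentUpTo T n) = 0 :=
  learner_of_zero_notMem fun h0 => by
    simpa [hT] using coe_finContentUpTo_subset_content T n h0

/-- The class `𝓛` is Ex-learnable by a computable set-driven learner with respect to
some hypothesis space with decidable membership. -/
theorem setdriven_learner_for_class :
    ∃ (h : Finset ℕ → ℕ) (H : ℕ → Set ℕ),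
      (∃ f : List ℕ → ℕ, Computable f ∧ ∀ D : Finset ℕ, h D = f (D.sort (· ≤ ·))) ∧
      (∃ dec : ℕ → ℕ → Bool, Computable₂ dec ∧ ∀ i x, x ∈ H i ↔ dec i x = true) ∧
      ∀ L ∈ theClass, ∀ T : ℕ → Option ℕ, content T = L →
        ∃ n₀, ∀ n ≥ n₀,
          h (finContentUpTo T n) = h (finContentUpTo T n₀) ∧
          H (h (finContentUpTo T n₀)) = L := by
  refine ⟨learner, hypothesis, ⟨listLearner, primrec_listLearner.to_comp, fun _ => rfl⟩,
    ⟨hypothesisMem, primrec₂_hypothesisMem.to_comp, mem_hypothesis_iff⟩, ?_⟩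
  rintro L (rfl | ⟨D, rfl⟩) T hT
  · refine ⟨0, fun n _ => ?_⟩
    rw [learner_eq_zero_of_content_eq hT, learner_eq_zero_of_content_eq hT]
    exact ⟨rfl, rfl⟩
  · have hE : content T = ↑(insert 0 D) := by simpa [Set.union_comm] using hT
    simpa [Set.union_comm] using learner_eventually_eq_of_content_eq_finset
      (Finset.mem_insert_self 0 D) hE
end

section
/- Every Gold-style learner that explanatorily learns a language L has a locking sequence for L: if for every text T for L the hypothesis sequence n ↦ h(T[n]) converges syntactically to a hypothesis whose denoted language is L, then there exists a finite sequence σ of elements of L (and pauses) such that for every finite sequence τ over L ∪ {#}, h(σ ⌢ τ) = h(σ) and the language denoted by h(σ) is L. -/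
/-- The length-`n` initial segment `T[n]` of a text, as a finite sequence. -/
def seg (T : ℕ → Option ℕ) (n : ℕ) : List (Option ℕ) := (List.range n).map T

/-- The content of a finite sequence over `ℕ ∪ {#}`. -/
def lcontent (σ : List (Option ℕ)) : Set ℕ := {x | (some x) ∈ σ}

/-!
Build a text for `L` in stages: extend the current sequence by some `τ` over `L` on which the
learner changes its mind, whenever such a `τ` exists, then append the next element of `L` (or a
pause). On this text the learner converges from some `n₀` on, so at stage `n₀` no mind-changing
extension was available: the stage is a locking sequence, and it denotes `L` because the learner
has already converged there.
-/

section PrefixLimit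

variable {α : Type*} {s : ℕ → List α}

/-- The filler `d` is never read once `n < (s (n + 1)).length` for all `n`. -/
def prefixLimit (s : ℕ → List α) (d : α) (n : ℕ) : α := (s (n + 1)).getD n d

theorem isPrefix_of_le (hs : ∀ k, s k <+: s (k + 1)) {k m : ℕ} (hkm : k ≤ m) :
    s k <+: s m := by
  induction m, hkm using Nat.le_induction with
  | base => exact List.prefix_refl _
  | succ m _ ih => exact ih.trans (hs m)

variable (hs : ∀ k, s k <+: s (k + 1)) (hlen : ∀ n, n < (s (n + 1)).length) (d : α)
include hs hlen

theorem prefixLimit_eq_getElem {k i : ℕ} (hi : i < (s k).length) :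
    prefixLimit s d i = (s k)[i] := by
  rw [prefixLimit, List.getD_eq_getElem _ _ (hlen i)]
  rcases le_total (i + 1) k with hle | hle
  · exact (isPrefix_of_le hs hle).getElem (hlen i)
  · exact ((isPrefix_of_le hs hle).getElem hi).symm

theorem map_range_prefixLimit {l : List α} {k : ℕ} (hl : l <+: s k) :
    (List.range l.length).map (prefixLimit s d) = l := by
  refine List.ext_getElem (by simp) fun i _ hi => ?_
  rw [List.getElem_map, List.getElem_range,
    prefixLimit_eq_getElem hs hlen d (hi.trans_le hl.length_le), hl.getElem hi]

theorem exists_prefixLimit_eq_iff {a : α} :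
    (∃ n, prefixLimit s d n = a) ↔ ∃ k, a ∈ s k := by
  constructor
  · rintro ⟨n, rfl⟩
    exact ⟨n + 1, by rw [prefixLimit_eq_getElem hs hlen d (hlen n)]; exact List.getElem_mem _⟩
  · rintro ⟨k, hk⟩
    obtain ⟨i, hi, rfl⟩ := List.mem_iff_getElem.mp hk
    exact ⟨i, prefixLimit_eq_getElem hs hlen d hi⟩

end PrefixLimit

theorem lcontent_append (σ τ : List (Option ℕ)) :
    lcontent (σ ++ τ) = lcontent σ ∪ lcontent τ := by
  ext x; simp [lcontent]

namespace LockingSequence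

open Classical

variable (h : List (Option ℕ) → ℕ) (L : Set ℕ)

noncomputable def pad (k : ℕ) : Option ℕ := if k ∈ L then some k else none

theorem lcontent_pad_subset (k : ℕ) : lcontent [pad L k] ⊆ L := by
  intro x hx
  simp only [lcontent, pad, List.mem_singleton, Set.mem_ofPred_eq] at hx
  split_ifs at hx with hk
  · exact Option.some_injective _ hx ▸ hk

noncomputable def mindChangeExt (σ : List (Option ℕ)) : List (Option ℕ) :=
  if c : ∃ τ, lcontent τ ⊆ L ∧ h (σ ++ τ) ≠ h σ then c.choose else []

theorem lcontent_mindChangeExt_subset (σ : List (Option ℕ)) :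
    lcontent (mindChangeExt h L σ) ⊆ L := by
  unfold mindChangeExt
  split_ifs with c
  · exact c.choose_spec.1
  · simp [lcontent]

theorem locked_of_apply_append_mindChangeExt {σ : List (Option ℕ)}
    (hσ : h (σ ++ mindChangeExt h L σ) = h σ) (τ : List (Option ℕ))
    (hτ : lcontent τ ⊆ L) : h (σ ++ τ) = h σ := by
  by_contra hne
  have c : ∃ τ, lcontent τ ⊆ L ∧ h (σ ++ τ) ≠ h σ := ⟨τ, hτ, hne⟩
  rw [mindChangeExt, dif_pos c] at hσ
  exact c.choose_spec.2 hσ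

noncomputable def stage : ℕ → List (Option ℕ)
  | 0 => []
  | k + 1 => stage k ++ mindChangeExt h L (stage k) ++ [pad L k]

theorem isPrefix_stage_succ (k : ℕ) : stage h L k <+: stage h L (k + 1) :=
  (List.prefix_append _ _).trans (List.prefix_append _ _)

theorem le_length_stage (k : ℕ) : k ≤ (stage h L k).length := by
  induction k with
  | zero => exact Nat.zero_le _
  | succ k ih => simp only [stage, List.length_append, List.length_singleton]; omega

theorem lcontent_stage_subset (k : ℕ) : lcontent (stage h L k) ⊆ L := by
  induction k with
  | zero => simp [stage, lcontent]
  | succ k ih =>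
    simp only [stage, lcontent_append]
    exact Set.union_subset (Set.union_subset ih (lcontent_mindChangeExt_subset h L _))
      (lcontent_pad_subset L k)

theorem lt_length_stage_succ (n : ℕ) : n < (stage h L (n + 1)).length :=
  Nat.lt_of_lt_of_le n.lt_succ_self (le_length_stage h L _)

noncomputable def text : ℕ → Option ℕ := prefixLimit (stage h L) none

theorem seg_text {σ : List (Option ℕ)} {k : ℕ} (hσ : σ <+: stage h L k) :
    seg (text h L) σ.length = σ :=
  map_range_prefixLimit (isPrefix_stage_succ h L) (lt_length_stage_succ h L) none hσ

theorem content_text : content (text h L) = L := by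
  ext x
  rw [content, Set.mem_ofPred_eq, text,
    exists_prefixLimit_eq_iff (isPrefix_stage_succ h L) (lt_length_stage_succ h L)]
  constructor
  · rintro ⟨k, hk⟩
    exact lcontent_stage_subset h L k hk
  · intro hx
    refine ⟨x + 1, List.mem_append_right _ ?_⟩
    simp [pad, hx]

end LockingSequence

open LockingSequence in
/-- Blum–Blum locking sequence lemma for explanatory learning: any Gold-style learner
that Ex-learns `L` on every text for `L` has a locking sequence for `L`. -/
theorem locking_sequence (H : ℕ → Set ℕ) (h : List (Option ℕ) → ℕ) (L : Set ℕ)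
    (hLearn : ∀ T : ℕ → Option ℕ, content T = L →
      ∃ n₀, ∀ n ≥ n₀, h (seg T n) = h (seg T n₀) ∧ H (h (seg T n₀)) = L) :
    ∃ σ : List (Option ℕ), lcontent σ ⊆ L ∧
      (∀ τ : List (Option ℕ), lcontent τ ⊆ L → h (σ ++ τ) = h σ) ∧
      H (h σ) = L := by
  obtain ⟨n₀, hn₀⟩ := hLearn (text h L) (content_text h L)
  set σ := stage h L n₀
  have hσ : n₀ ≤ σ.length := le_length_stage h L n₀
  have hσext : σ ++ mindChangeExt h L σ <+: stage h L (n₀ + 1) := List.prefix_append _ _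
  have hσ_conv : h σ = h (seg (text h L) n₀) := by
    rw [← (hn₀ _ hσ).1, seg_text h L (List.prefix_refl σ)]
  have hσext_conv : h (σ ++ mindChangeExt h L σ) = h (seg (text h L) n₀) := by
    rw [← (hn₀ _ (hσ.trans (List.prefix_append _ _).length_le)).1, seg_text h L hσext]
  refine ⟨σ, lcontent_stage_subset h L n₀,
    locked_of_apply_append_mindChangeExt h L (hσext_conv.trans hσ_conv.symm), ?_⟩
  rw [hσ_conv]
  exact (hn₀ n₀ le_rfl).2
end

section
/- If a Gold-style learner h (explanatorily) learning a language L is consistent and target-cautious on texts for L, then the learner h' that keeps its previous hypothesis when the new datum is already contained in it and otherwise switches to h's current hypothesis, is witness-based on every text for L. -/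
/-- If a Gold-style learner `h` that Ex-learns `L` is consistent and target-cautious
on every text for `L`, then the derived learner `h'` — which keeps its previous
hypothesis as long as the new datum is contained in it (or is a pause), and otherwise
switches to `h`'s current hypothesis — is witness-based on every text for `L`. -/
theorem consistent_cauttar_gives_witness_based
    (H : ℕ → Set ℕ) (h h' : List (Option ℕ) → ℕ) (L : Set ℕ)
    -- h Ex-learns L on every text for L:
    (hLearn : ∀ T : ℕ → Option ℕ, content T = L →
      ∃ n₀, ∀ n ≥ n₀, h (seg T n) = h (seg T n₀) ∧ H (h (seg T n₀)) = L)
    -- h is consistent on every text for L: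
    (hCons : ∀ T : ℕ → Option ℕ, content T = L →
      ∀ i, contentUpTo T i ⊆ H (h (seg T i)))
    -- h is target-cautious on every text for L:
    (hCautTar : ∀ T : ℕ → Option ℕ, content T = L →
      ∀ i, ¬ (content T ⊂ H (h (seg T i))))
    -- defining equations of h':
    (hInit : h' [] = h [])
    (hPause : ∀ σ : List (Option ℕ), h' (σ ++ [none]) = h' σ)
    (hKeep : ∀ (σ : List (Option ℕ)) (a : ℕ), a ∈ H (h' σ) → h' (σ ++ [some a]) = h' σ)
    (hSwitch : ∀ (σ : List (Option ℕ)) (a : ℕ), a ∉ H (h' σ) →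
      h' (σ ++ [some a]) = h (σ ++ [some a])) :
    -- conclusion: h' is witness-based on every text for L
    ∀ T : ℕ → Option ℕ, content T = L →
      ∀ i j, (∃ k, i < k ∧ k ≤ j ∧ h' (seg T i) ≠ h' (seg T k)) →
        ((contentUpTo T j ∩ H (h' (seg T j))) \ H (h' (seg T i))).Nonempty := by
  intro T hT i j ⟨k, hik, hkj, hne⟩
  have seg_succ : ∀ n, seg T (n+1) = seg T n ++ [T n] := by
    intro n; simp [seg, List.range_succ]
  have cmono : ∀ {m n : ℕ}, m ≤ n → contentUpTo T m ⊆ contentUpTo T n := by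
    rintro m n hmn x ⟨p, hp, hx⟩; exact ⟨p, lt_of_lt_of_le hp hmn, hx⟩
  -- propagation: if contentUpTo T m is inside h''s hypothesis at m, it stays inside
  have propag : ∀ m n, m ≤ n → contentUpTo T m ⊆ H (h' (seg T m)) →
      contentUpTo T m ⊆ H (h' (seg T n)) := by
    intro m n hmn hbase
    induction n with
    | zero =>
      have : m = 0 := Nat.le_zero.mp hmn
      subst this; exact hbase
    | succ n ih =>
      rcases Nat.lt_or_ge n m with hge | hlt
      · have : m = n + 1 := le_antisymm hmn hge
        subst this; exact hbase
      · have ihn := ih hlt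
        rw [seg_succ]
        cases hTn : T n with
        | none => rw [hPause]; exact ihn
        | some a =>
          by_cases ha : a ∈ H (h' (seg T n))
          · rw [hKeep _ _ ha]; exact ihn
          · rw [hSwitch _ _ ha]
            have hseg : seg T n ++ [some a] = seg T (n+1) := by
              rw [seg_succ, hTn]
            rw [hseg]
            exact fun x hx => hCons T hT (n+1) (cmono hmn hx)
  -- find the first mind change after i
  have findm : ∀ k, i < k → h' (seg T i) ≠ h' (seg T k) →
      ∃ m a, i < m ∧ m ≤ k ∧ T (m-1) = some a ∧ a ∉ H (h' (seg T i)) ∧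
        h' (seg T m) = h (seg T m) := by
    intro k
    induction k with
    | zero => intro h0; exact absurd h0 (Nat.not_lt_zero i)
    | succ k ih =>
      intro hik hne
      by_cases hprev : i < k ∧ h' (seg T i) ≠ h' (seg T k)
      · obtain ⟨m, a, h1, h2, h3, h4, h5⟩ := ih hprev.1 hprev.2
        exact ⟨m, a, h1, Nat.le_succ_of_le h2, h3, h4, h5⟩
      · -- h' (seg T k) = h' (seg T i)
        have heqk : h' (seg T k) = h' (seg T i) := by
          rcases Nat.lt_or_ge i k with hlt | hge
          · by_contra hc
            exact hprev ⟨hlt, fun e => hc e.symm⟩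
          · have : i = k := le_antisymm (Nat.lt_succ_iff.mp hik) hge
            rw [this]
        rw [seg_succ] at hne
        cases hTk : T k with
        | none => rw [hTk, hPause] at hne; exact absurd heqk (fun e => hne e.symm)
        | some a =>
          rw [hTk] at hne
          by_cases ha : a ∈ H (h' (seg T k))
          · rw [hKeep _ _ ha] at hne; exact absurd heqk (fun e => hne e.symm)
          · refine ⟨k+1, a, hik, le_refl _, by simpa using hTk, ?_, ?_⟩
            · rw [heqk] at ha; exact ha
            · rw [seg_succ, hTk]; exact hSwitch _ _ ha
  obtain ⟨m, a, him, hmk, hTm, haH, hsw⟩ := findm k hik hne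
  have hm1 : m - 1 < m := Nat.sub_lt (Nat.lt_of_le_of_lt (Nat.zero_le i) him) Nat.one_pos
  have hain : a ∈ contentUpTo T m := ⟨m - 1, hm1, hTm⟩
  have hmj : m ≤ j := le_trans hmk hkj
  have hbase : contentUpTo T m ⊆ H (h' (seg T m)) := by
    rw [hsw]; exact hCons T hT m
  refine ⟨a, ⟨cmono hmj hain, propag m j hmj hbase hain⟩, haH⟩
end
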